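/- For every perfect square n, there exists a set P of n points in ℝ² such that no two points of P share an x-coordinate and P spans exactly 2√n − 2 distinct distances under the L∞ metric. -/
import Mathlib

private lemma one_le_abs_cast_sub {a b : ℕ} (h : a ≠ b) : 1 ≤ |(a:ℝ) - (b:ℝ)| := by
  rcases h.lt_or_gt with h | h
  · have h1 : (a:ℝ) + 1 ≤ b := by exact_mod_cast h
    rw [abs_sub_comm, abs_of_nonneg (by linarith)]; linarith
  · have h1 : (b:ℝ) + 1 ≤ a := by exact_mod_cast h
    rw [abs_of_nonneg (by linarith)]; linarith

private lemma abs_cast_sub_lt {a b k : ℕ} (ha : a < k) (hb : b < k) :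
    |(a:ℝ) - (b:ℝ)| < k := by
  have h1 : (a:ℝ) < k := by exact_mod_cast ha
  have h2 : (b:ℝ) < k := by exact_mod_cast hb
  have h3 : (0:ℝ) ≤ a := Nat.cast_nonneg a
  have h4 : (0:ℝ) ≤ b := Nat.cast_nonneg b
  rw [abs_sub_lt_iff]; constructor <;> linarith

private lemma exists_nat_abs {k : ℕ} {a b : ℕ} (h : a ≠ b) (ha : a < k) (hb : b < k) :
    ∃ j ∈ Finset.Icc 1 (k-1), (j:ℝ) = |(a:ℝ) - (b:ℝ)| := by
  rcases h.lt_or_gt with h | h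
  · refine ⟨b - a, ?_, ?_⟩
    · rw [Finset.mem_Icc]; omega
    · have hle : (a:ℝ) ≤ b := by exact_mod_cast h.le
      rw [abs_sub_comm, abs_of_nonneg (by linarith), Nat.cast_sub h.le]
  · refine ⟨a - b, ?_, ?_⟩
    · rw [Finset.mem_Icc]; omega
    · have hle : (b:ℝ) ≤ a := by exact_mod_cast h.le
      rw [abs_of_nonneg (by linarith), Nat.cast_sub h.le]

/-- For every perfect square `n = k^2` (`k ≥ 1`), there is a set `P` of `n` points,
no two sharing an x-coordinate, spanning exactly `2√n − 2 = 2k − 2` distinct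
L∞ distances. -/
theorem exists_no_repeated_x_with_two_sqrt_n_distances (k : ℕ) (hk : 1 ≤ k) :
    ∃ P : Finset (ℝ × ℝ),
      P.card = k ^ 2 ∧
      (∀ u ∈ P, ∀ v ∈ P, u ≠ v → u.1 ≠ v.1) ∧
      {d : ℝ | ∃ u ∈ P, ∃ v ∈ P, u ≠ v ∧ d = max |u.1 - v.1| |u.2 - v.2|}.ncard
        = 2 * k - 2 := by
  have hk' : (1:ℝ) ≤ (k:ℝ) := by exact_mod_cast hk
  have hk0 : (0:ℝ) < k := by linarith
  set ε : ℝ := 1/(10*k) with hεdef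
  set δ : ℝ := 1/(20*k^2) with hδdef
  have hε : 0 < ε := by positivity
  have hδ : 0 < δ := by positivity
  have hkε : (k:ℝ) * ε = 1/10 := by rw [hεdef]; field_simp
  have hkδ : (k:ℝ) * δ ≤ 1/20 := by
    rw [hδdef, mul_one_div, div_le_div_iff₀ (by positivity) (by norm_num)]
    nlinarith
  have hεδ : ε = 2*(k:ℝ)*δ := by
    rw [hεdef, hδdef]; field_simp; ring
  set f : ℕ × ℕ → ℝ × ℝ := fun p => ((p.1:ℝ) * δ + (p.2:ℝ) * ε, (p.1:ℝ)) with hf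
  -- key injectivity of x-coordinates
  have key : ∀ a c a' c' : ℕ, a < k → c < k → a' < k → c' < k →
      (a:ℝ)*δ + (a':ℝ)*ε = (c:ℝ)*δ + (c':ℝ)*ε → a = c ∧ a' = c' := by
    intro a c a' c' ha hc ha' hc' heq
    have hac : a' = c' := by
      by_contra hne
      have h1 : 1 ≤ |(c':ℝ) - (a':ℝ)| := one_le_abs_cast_sub (Ne.symm hne)
      have h2 : ((a:ℝ) - c)*δ = ((c':ℝ) - a')*ε := by linear_combination heq
      have h3 : |(a:ℝ) - c| < k := abs_cast_sub_lt ha hc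
      have h4 : |((a:ℝ) - c)*δ| = |((c':ℝ) - a')*ε| := by rw [h2]
      rw [abs_mul, abs_mul, abs_of_pos hδ, abs_of_pos hε] at h4
      have h5 : |(a:ℝ) - c| * δ < (k:ℝ) * δ := by
        apply mul_lt_mul_of_pos_right h3 hδ
      have h6 : ε ≤ |(c':ℝ) - a'| * ε := le_mul_of_one_le_left hε.le h1
      nlinarith
    subst hac
    have h7 : (a:ℝ)*δ = (c:ℝ)*δ := by linarith
    have h8 : (a:ℝ) = c := mul_right_cancel₀ hδ.ne' h7
    exact ⟨Nat.cast_injective h8, rfl⟩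
  set S : Finset (ℕ × ℕ) := Finset.range k ×ˢ Finset.range k with hS
  have memS : ∀ p : ℕ × ℕ, p ∈ S ↔ p.1 < k ∧ p.2 < k := by
    intro p; simp [hS, Finset.mem_product]
  have finj : Set.InjOn f ↑S := by
    rintro ⟨a, a'⟩ hm ⟨c, c'⟩ hm' heq
    rw [Finset.mem_coe, memS] at hm hm'
    have hx := congrArg Prod.fst heq
    simp only [hf] at hx
    have := key a c a' c' hm.1 hm'.1 hm.2 hm'.2 hx
    simp [Prod.ext_iff, this.1, this.2]
  set P : Finset (ℝ × ℝ) := S.image f with hP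
  have memP : ∀ u, u ∈ P ↔ ∃ a a', a < k ∧ a' < k ∧ f (a, a') = u := by
    intro u
    simp only [hP, Finset.mem_image]
    constructor
    · rintro ⟨⟨a, a'⟩, hm, rfl⟩
      rw [memS] at hm
      exact ⟨a, a', hm.1, hm.2, rfl⟩
    · rintro ⟨a, a', ha, ha', rfl⟩
      exact ⟨(a, a'), by rw [memS]; exact ⟨ha, ha'⟩, rfl⟩
  refine ⟨P, ?_, ?_, ?_⟩
  · rw [hP, Finset.card_image_of_injOn finj, hS, Finset.card_product,
      Finset.card_range, sq]
  · intro u hu v hv huv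
    rw [memP] at hu hv
    obtain ⟨a, a', ha, ha', rfl⟩ := hu
    obtain ⟨c, c', hc, hc', rfl⟩ := hv
    intro hx
    simp only [hf] at hx
    obtain ⟨h1, h2⟩ := key a c a' c' ha hc ha' hc' hx
    exact huv (by simp [h1, h2])
  · set D : Finset ℝ := (Finset.Icc 1 (k-1)).image (fun j : ℕ => (j:ℝ)*ε)
      ∪ (Finset.Icc 1 (k-1)).image (fun j : ℕ => (j:ℝ)) with hD
    have hsmall : ∀ j ∈ Finset.Icc 1 (k-1), (j:ℝ) * ε < 1 := by
      intro j hj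
      rw [Finset.mem_Icc] at hj
      have : (j:ℝ) ≤ k := by exact_mod_cast (by omega : j ≤ k)
      nlinarith
    have hset : {d : ℝ | ∃ u ∈ P, ∃ v ∈ P, u ≠ v ∧ d = max |u.1 - v.1| |u.2 - v.2|}
        = ↑D := by
      ext d
      simp only [Set.mem_setOf_eq, Finset.mem_coe, hD, Finset.mem_union, Finset.mem_image]
      constructor
      · rintro ⟨u, hu, v, hv, huv, rfl⟩
        rw [memP] at hu hv
        obtain ⟨a, a', ha, ha', rfl⟩ := hu
        obtain ⟨c, c', hc, hc', rfl⟩ := hv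
        simp only [hf]
        by_cases hac : a = c
        · subst hac
          have hne : a' ≠ c' := by
            intro h; exact huv (by simp [h])
          obtain ⟨j, hj, hjv⟩ := exists_nat_abs hne ha' hc'
          left
          refine ⟨j, hj, ?_⟩
          have : (a:ℝ)*δ + (a':ℝ)*ε - ((a:ℝ)*δ + (c':ℝ)*ε) = ((a':ℝ) - c')*ε := by
            ring
          rw [this, sub_self, abs_zero, abs_mul, abs_of_pos hε, ← hjv,
            max_eq_left (by positivity)]
        · obtain ⟨j, hj, hjv⟩ := exists_nat_abs hac ha hc
          right
          refine ⟨j, hj, ?_⟩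
          have h1 : 1 ≤ |(a:ℝ) - c| := one_le_abs_cast_sub hac
          have hxb : |(a:ℝ)*δ + (a':ℝ)*ε - ((c:ℝ)*δ + (c':ℝ)*ε)| ≤ |(a:ℝ) - c| := by
            have e1 : (a:ℝ)*δ + (a':ℝ)*ε - ((c:ℝ)*δ + (c':ℝ)*ε)
                = ((a:ℝ) - c)*δ + ((a':ℝ) - c')*ε := by ring
            rw [e1]
            calc |((a:ℝ) - c)*δ + ((a':ℝ) - c')*ε|
                ≤ |((a:ℝ) - c)*δ| + |((a':ℝ) - c')*ε| := abs_add_le _ _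
              _ = |(a:ℝ) - c| * δ + |(a':ℝ) - c'| * ε := by
                  rw [abs_mul, abs_mul, abs_of_pos hδ, abs_of_pos hε]
              _ ≤ (k:ℝ)*δ + (k:ℝ)*ε := by
                  have b1 := abs_cast_sub_lt ha hc
                  have b2 := abs_cast_sub_lt ha' hc'
                  nlinarith
              _ ≤ 1 := by rw [hkε]; linarith
              _ ≤ |(a:ℝ) - c| := h1
          rw [max_eq_right hxb, hjv]
      · rintro (⟨j, hj, rfl⟩ | ⟨j, hj, rfl⟩)
        · -- distance j*ε between f(0,0) and f(0,j)
          have hjk : j < k := by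
            rw [Finset.mem_Icc] at hj; omega
          have hj1 : 1 ≤ j := by rw [Finset.mem_Icc] at hj; exact hj.1
          have hj1' : (1:ℝ) ≤ j := by exact_mod_cast hj1
          refine ⟨f (0, 0), ?_, f (0, j), ?_, ?_, ?_⟩
          · rw [memP]; exact ⟨0, 0, hk, hk, rfl⟩
          · rw [memP]; exact ⟨0, j, hk, hjk, rfl⟩
          · intro h
            have hx := congrArg Prod.fst h
            simp only [hf] at hx
            push_cast at hx
            nlinarith
          · simp only [hf]
            push_cast
            rw [show (0:ℝ)*δ + 0*ε - (0*δ + (j:ℝ)*ε) = -((j:ℝ)*ε) by ring,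
              abs_neg, sub_self, abs_zero, abs_of_nonneg (by positivity),
              max_eq_left (by positivity)]
        · -- distance j between f(0,0) and f(j,0)
          have hjk : j < k := by
            rw [Finset.mem_Icc] at hj; omega
          have hj1 : 1 ≤ j := by rw [Finset.mem_Icc] at hj; exact hj.1
          have hj1' : (1:ℝ) ≤ j := by exact_mod_cast hj1
          have hδ1 : δ ≤ 1 := by
            rw [hδdef]
            rw [div_le_one (by positivity)]
            nlinarith
          refine ⟨f (0, 0), ?_, f (j, 0), ?_, ?_, ?_⟩
          · rw [memP]; exact ⟨0, 0, hk, hk, rfl⟩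
          · rw [memP]; exact ⟨j, 0, hjk, hk, rfl⟩
          · intro h
            have hx := congrArg Prod.fst h
            simp only [hf] at hx
            push_cast at hx
            nlinarith
          · simp only [hf]
            push_cast
            rw [show (0:ℝ)*δ + 0*ε - ((j:ℝ)*δ + 0*ε) = -((j:ℝ)*δ) by ring,
              abs_neg, show (0:ℝ) - (j:ℝ) = -(j:ℝ) by ring, abs_neg,
              abs_of_nonneg (by positivity), abs_of_nonneg (by positivity)]
            rw [max_eq_right (by nlinarith)]
    rw [hset, Set.ncard_coe_finset, hD]
    rw [Finset.card_union_of_disjoint]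
    · rw [Finset.card_image_of_injective _ (fun a b h => by
          exact Nat.cast_injective (mul_right_cancel₀ hε.ne' h)),
        Finset.card_image_of_injective _ Nat.cast_injective,
        Nat.card_Icc]
      omega
    · rw [Finset.disjoint_left]
      rintro x hx hx'
      rw [Finset.mem_image] at hx hx'
      obtain ⟨j, hj, rfl⟩ := hx
      obtain ⟨j', hj', hv⟩ := hx'
      have h1 : (j:ℝ)*ε < 1 := hsmall j hj
      have h2 : (1:ℝ) ≤ j' := by
        rw [Finset.mem_Icc] at hj'
        exact_mod_cast hj'.1
      rw [hv] at h2
      linarith
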